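/- arXiv:1808.06734 — 2 statements merged into one kernel-verified Lean document; each statement's English description precedes it below -/
import Mathlib

section
/- For every positive integer n, the fully active cop number of the hypercube Q_n equals ⌈2n/3⌉. -/
/-!
Every move is forced, so the parity of each cop's distance to the robber is the same at all
of his turns.

Robber, against `k` cops with `3 k < 2 n`: he keeps every cop at distance at least 2. After the
cops move, a cop that was at odd distance can block two of his `n` escape coordinates and one at
even distance only one. He starts in the parity class that makes this weighted count at most
`⌊3 k / 2⌋ < n`, at a vertex of that class at distance at least 2 from every cop (the
`n (n - 1) / 2` bad vertices are fewer than the `2 ^ (n - 1)` in the class); then an escape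
coordinate is always left.

Cops, `k = ⌈2 n / 3⌉` of them: alternately on `0` and on a neighbour of `0`, so cops of one index
parity are always at odd distance at the cops' turn. The coordinates are split into territories
of one or two coordinates per cop, two only for such cops (`n ≤ k + ⌊k / 2⌋`). A cop not about
to capture is at distance at least 2, and at odd distance if it owns two coordinates, so it
differs from the robber in a coordinate outside its territory; it toggles that coordinate. The potential `∑ᵢ 2 |Dᵢ \ Θᵢ| + |Θᵢ \ Dᵢ|` (`Dᵢ` the coordinates where
cop `i` and the robber differ, `Θᵢ` its territory) drops by `2 k` in the cops' move and rises by at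
most `2 k - 1` in the robber's, so the game ends.
-/

open SimpleGraph

universe u v

variable {V : Type u}

/-- A configuration in the game of Cops and Robbers with `n` cops:
the positions of the cops together with the position of the robber. -/
abbrev CRConfig (V : Type u) (n : ℕ) : Type u := (Fin n → V) × V

/-- A strategy for `n` cops in the *fully active* game on `G`:
initial positions, together with a move function (which may depend on the
full history of the play and on the current configuration) under which
every cop moves to an adjacent vertex on every turn. -/
structure ActiveCopStrategy (G : SimpleGraph V) (n : ℕ) where
  init : Fin n → V
  move : List (CRConfig V n) → CRConfig V n → Fin n → V
  move_adj : ∀ h c i, G.Adj (c.1 i) (move h c i)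

/-- A strategy for the robber in the *fully active* game on `G`:
an initial position (chosen knowing the cops' initial positions),
together with a move function (which may depend on the full history and on
the current configuration, whose first component records the cops' newly
chosen positions) under which the robber moves to an adjacent vertex on
every turn. -/
structure ActiveRobberStrategy (G : SimpleGraph V) (n : ℕ) where
  init : (Fin n → V) → V
  move : List (CRConfig V n) → CRConfig V n → V
  move_adj : ∀ h c, G.Adj c.2 (move h c)

/-- A strategy for `n` cops in the *passive* (classical) game on `G`:
on her turn, each cop either moves to an adjacent vertex or stays put. -/
structure PassiveCopStrategy (G : SimpleGraph V) (n : ℕ) where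
  init : Fin n → V
  move : List (CRConfig V n) → CRConfig V n → Fin n → V
  move_adj : ∀ h c i, G.Adj (c.1 i) (move h c i) ∨ move h c i = c.1 i

/-- A strategy for the robber in the *passive* (classical) game on `G`:
on his turn the robber either moves to an adjacent vertex or stays put. -/
structure PassiveRobberStrategy (G : SimpleGraph V) (n : ℕ) where
  init : (Fin n → V) → V
  move : List (CRConfig V n) → CRConfig V n → V
  move_adj : ∀ h c, G.Adj c.2 (move h c) ∨ move h c = c.2

/-- The play determined by (the data of) a cop strategy and a robber strategy:
`crPlay n cinit rinit cmove rmove t` is the pair consisting of the history of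
configurations strictly before round `t` and the configuration after round `t`
(a round consists of a cop move followed by a robber move; round `0` is the
initial placement, cops first, then the robber). -/
def crPlay (n : ℕ) (cinit : Fin n → V) (rinit : (Fin n → V) → V)
    (cmove : List (CRConfig V n) → CRConfig V n → Fin n → V)
    (rmove : List (CRConfig V n) → CRConfig V n → V) :
    ℕ → List (CRConfig V n) × CRConfig V n
  | 0 => ([], (cinit, rinit cinit))
  | t + 1 =>
      let p := crPlay n cinit rinit cmove rmove t
      let c' := cmove p.1 p.2
      (p.1 ++ [p.2], (c', rmove p.1 (c', p.2.2)))

/-- The cops capture the robber in the given play: at some point of the play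
(either right after a robber move, or right after a cop move) some cop
occupies the robber's vertex. -/
def crCaptures (n : ℕ) (cinit : Fin n → V) (rinit : (Fin n → V) → V)
    (cmove : List (CRConfig V n) → CRConfig V n → Fin n → V)
    (rmove : List (CRConfig V n) → CRConfig V n → V) : Prop :=
  ∃ t : ℕ,
    (∃ i, (crPlay n cinit rinit cmove rmove t).2.1 i
        = (crPlay n cinit rinit cmove rmove t).2.2) ∨
    (∃ i, cmove (crPlay n cinit rinit cmove rmove t).1
            (crPlay n cinit rinit cmove rmove t).2 i
        = (crPlay n cinit rinit cmove rmove t).2.2)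

/-- In the fully active game, the given cop strategy captures the robber
playing the given strategy. -/
def ActiveCapture {G : SimpleGraph V} {n : ℕ} (cs : ActiveCopStrategy G n)
    (rs : ActiveRobberStrategy G n) : Prop :=
  crCaptures n cs.init rs.init cs.move rs.move

/-- In the passive game, the given cop strategy captures the robber
playing the given strategy. -/
def PassiveCapture {G : SimpleGraph V} {n : ℕ} (cs : PassiveCopStrategy G n)
    (rs : PassiveRobberStrategy G n) : Prop :=
  crCaptures n cs.init rs.init cs.move rs.move

/-- `n` cops have a winning strategy in the fully active game on `G`. -/
def ActiveCopsWin (G : SimpleGraph V) (n : ℕ) : Prop :=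
  ∃ cs : ActiveCopStrategy G n, ∀ rs : ActiveRobberStrategy G n, ActiveCapture cs rs

/-- `n` cops have a winning strategy in the passive (classical) game on `G`. -/
def PassiveCopsWin (G : SimpleGraph V) (n : ℕ) : Prop :=
  ∃ cs : PassiveCopStrategy G n, ∀ rs : PassiveRobberStrategy G n, PassiveCapture cs rs

/-- The fully active cop number of `G`. -/
noncomputable def acop (G : SimpleGraph V) : ℕ := sInf {n | ActiveCopsWin G n}

/-- The (classical, passive) cop number of `G`. -/
noncomputable def copNumber (G : SimpleGraph V) : ℕ := sInf {n | PassiveCopsWin G n}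
/-- The Cartesian (box) product of a family of graphs: two tuples are adjacent
iff they differ in exactly one coordinate, in which they are adjacent in the
corresponding factor. -/
def piBox {ι : Type v} {W : ι → Type u} (G : ∀ i, SimpleGraph (W i)) :
    SimpleGraph (∀ i, W i) where
  Adj x y := ∃ i, (G i).Adj (x i) (y i) ∧ ∀ j, j ≠ i → x j = y j
  symm := by
    constructor
    rintro x y ⟨i, hadj, heq⟩
    exact ⟨i, hadj.symm, fun j hj => (heq j hj).symm⟩
  loopless := by
    constructor
    rintro x ⟨i, hadj, -⟩
    exact (G i).irrefl hadj
/-- The `n`-dimensional hypercube `Q_n`: vertices are binary strings of length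
`n`, adjacent iff they differ in exactly one coordinate. -/
def hypercube (n : ℕ) : SimpleGraph (Fin n → Bool) :=
  piBox (fun _ : Fin n => completeGraph Bool)


open Finset
open scoped symmDiff

section

variable {α : Type*} [DecidableEq α]

lemma Finset.card_symmDiff_mod_two (s t : Finset α) :
    #(s ∆ t) % 2 = (#s + #t) % 2 := by
  rw [symmDiff_eq_sup_sdiff_inf, sup_eq_union, inf_eq_inter,
    card_sdiff_of_subset inter_subset_union]
  have := card_le_card (inter_subset_union (s := s) (t := t))
  have := card_union_add_card_inter s t
  omega

lemma Finset.symmDiff_singleton_of_mem {s : Finset α} {a : α}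
    (h : a ∈ s) : s ∆ {a} = s.erase a := by
  ext j
  rcases eq_or_ne j a with rfl | hj <;> simp [mem_symmDiff, *]

lemma Finset.symmDiff_singleton_of_notMem {s : Finset α} {a : α}
    (h : a ∉ s) : s ∆ {a} = insert a s := by
  ext j
  rcases eq_or_ne j a with rfl | hj <;> simp [mem_symmDiff, *]

lemma Finset.exists_mem_forall_notMem_of_sum_card_lt {ι : Type*}
    {S : Finset α} {s : Finset ι} {B : ι → Finset α} (h : ∑ i ∈ s, #(B i) < #S) :
    ∃ x ∈ S, ∀ i ∈ s, x ∉ B i := by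
  obtain ⟨x, hxS, hx⟩ := exists_mem_notMem_of_card_lt_card (card_biUnion_le.trans_lt h)
  exact ⟨x, hxS, fun i hi hxi => hx (mem_biUnion.2 ⟨i, hi, hxi⟩)⟩

end

theorem Nat.mul_pred_lt_two_pow (n : ℕ) : n * (n - 1) < 2 ^ n := by
  induction n with
  | zero => simp
  | succ n ih =>
    rw [pow_succ, Nat.add_sub_cancel]
    rcases n with _ | n
    · simp
    · have := n.lt_two_pow_self
      simp only [Nat.add_sub_cancel, pow_succ] at ih ⊢
      nlinarith

section ActiveGame

variable {G : SimpleGraph V} {k : ℕ}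

lemma crPlay_headD (cinit : Fin k → V) (rinit : (Fin k → V) → V)
    (cmove : List (CRConfig V k) → CRConfig V k → Fin k → V)
    (rmove : List (CRConfig V k) → CRConfig V k → V) (t : ℕ) :
    (crPlay k cinit rinit cmove rmove t).1.headD (crPlay k cinit rinit cmove rmove t).2 =
      (cinit, rinit cinit) := by
  induction t with
  | zero => rfl
  | succ t ih =>
    rw [← ih]
    change ((crPlay k cinit rinit cmove rmove t).1 ++ [_]).headD _ = _
    cases (crPlay k cinit rinit cmove rmove t).1 <;> rfl

/-- The cops' strategy may depend on the robber's initial vertex `r₀`. -/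
theorem activeCopsWin_of_potential (start : Fin k → V)
    (strat : V → (Fin k → V) → V → Fin k → V)
    (strat_adj : ∀ r₀ c r i, G.Adj (c i) (strat r₀ c r i))
    (Inv : V → (Fin k → V) → V → Prop) (Φ : V → (Fin k → V) → V → ℕ)
    (inv_start : ∀ r₀, Inv r₀ start r₀)
    (step : ∀ r₀ c r r', Inv r₀ c r → (∀ i, c i ≠ r) → (∀ i, strat r₀ c r i ≠ r) →
      G.Adj r r' → Inv r₀ (strat r₀ c r) r' ∧ Φ r₀ (strat r₀ c r) r' < Φ r₀ c r) :
    ActiveCopsWin G k := by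
  let cs : ActiveCopStrategy G k :=
    ⟨start, fun h c => strat (h.headD c).2 c.1 c.2, fun _ _ _ => strat_adj _ _ _ _⟩
  refine ⟨cs, fun rs => ?_⟩
  by_contra hcapture
  simp only [ActiveCapture, crCaptures, not_exists, not_or] at hcapture
  set r₀ := rs.init start
  set play := crPlay k start rs.init cs.move rs.move
  have hmove : ∀ t, cs.move (play t).1 (play t).2 = strat r₀ (play t).2.1 (play t).2.2 := by
    intro t
    change strat ((play t).1.headD (play t).2).2 _ _ = _
    rw [crPlay_headD]
  have hplay : ∀ t, Inv r₀ (play t).2.1 (play t).2.2 ∧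
      Φ r₀ (play t).2.1 (play t).2.2 + t ≤ Φ r₀ start r₀ := by
    intro t
    induction t with
    | zero => exact ⟨inv_start r₀, le_refl _⟩
    | succ t ih =>
      have hcop := (hcapture t).2
      rw [hmove t] at hcop
      set c' := strat r₀ (play t).2.1 (play t).2.2
      set r' := rs.move (play t).1 (c', (play t).2.2)
      obtain ⟨hinv, hdec⟩ : Inv r₀ c' r' ∧ Φ r₀ c' r' < Φ r₀ (play t).2.1 (play t).2.2 :=
        step r₀ _ _ _ ih.1 (hcapture t).1 hcop (rs.move_adj (play t).1 (c', (play t).2.2))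
      have hnext : (play (t + 1)).2 = (c', r') := by
        change (cs.move (play t).1 (play t).2,
          rs.move (play t).1 (cs.move (play t).1 (play t).2, (play t).2.2)) = _
        rw [hmove]
      rw [hnext]
      exact ⟨hinv, by dsimp only; omega⟩
  have := (hplay (Φ r₀ start r₀ + 1)).2
  omega

theorem not_activeCopsWin_of_safe (Safe : (Fin k → V) → V → Prop)
    (exists_adj : ∀ v, ∃ w, G.Adj v w)
    (safe_start : ∀ c, ∃ r, Safe c r)
    (safe_step : ∀ c r c', Safe c r → (∀ i, G.Adj (c i) (c' i)) → ∃ r', G.Adj r r' ∧ Safe c' r')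
    (safe_far : ∀ c r, Safe c r → ∀ i, c i ≠ r ∧ ¬ G.Adj (c i) r) :
    ¬ ActiveCopsWin G k := by
  classical
  let rs : ActiveRobberStrategy G k :=
    { init := fun c => (safe_start c).choose
      move := fun _ cfg =>
        if h : ∃ r', G.Adj cfg.2 r' ∧ Safe cfg.1 r' then h.choose else (exists_adj cfg.2).choose
      move_adj := fun _ cfg => by
        split_ifs with h
        exacts [h.choose_spec.1, (exists_adj cfg.2).choose_spec] }
  rintro ⟨cs, hcs⟩
  set play := crPlay k cs.init rs.init cs.move rs.move
  have hsafe : ∀ t, Safe (play t).2.1 (play t).2.2 := by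
    intro t
    induction t with
    | zero => exact (safe_start cs.init).choose_spec
    | succ t ih =>
      have hex := safe_step _ _ _ ih (cs.move_adj (play t).1 (play t).2)
      change Safe _ (rs.move (play t).1 (cs.move (play t).1 (play t).2, (play t).2.2))
      simp only [rs, dif_pos hex]
      exact hex.choose_spec.2
  obtain ⟨t, ⟨i, hi⟩ | ⟨i, hi⟩⟩ := hcs rs
  · exact (safe_far _ _ (hsafe t) i).1 hi
  · exact (safe_far _ _ (hsafe t) i).2 (hi ▸ cs.move_adj (play t).1 (play t).2 i)

end ActiveGame

namespace Hypercube

variable {n k σ : ℕ}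

def diffSet (x y : Fin n → Bool) : Finset (Fin n) := {i | x i ≠ y i}

lemma card_diffSet (x y : Fin n → Bool) : #(diffSet x y) = hammingDist x y := rfl

lemma diffSet_comm (x y : Fin n → Bool) : diffSet x y = diffSet y x := by
  simp only [diffSet, ne_comm]

lemma symmDiff_diffSet (x y z : Fin n → Bool) :
    diffSet x y ∆ diffSet y z = diffSet x z := by
  ext i
  simp only [diffSet, mem_symmDiff, mem_filter, mem_univ, true_and]
  cases x i <;> cases y i <;> cases z i <;> decide

lemma diffSet_eq_empty {x y : Fin n → Bool} : diffSet x y = ∅ ↔ x = y := by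
  rw [← card_eq_zero, card_diffSet, hammingDist_eq_zero]

lemma hammingDist_mod_two (x y z : Fin n → Bool) :
    hammingDist x z % 2 = (hammingDist x y + hammingDist y z) % 2 := by
  rw [← card_diffSet, ← symmDiff_diffSet x y z, card_symmDiff_mod_two]
  rfl

def toggle (b : Fin n) (x : Fin n → Bool) : Fin n → Bool := Function.update x b (!x b)

lemma diffSet_toggle (b : Fin n) (x : Fin n → Bool) : diffSet x (toggle b x) = {b} := by
  ext i
  rw [diffSet, mem_filter, mem_singleton]
  rcases eq_or_ne i b with rfl | hi
  · simp [toggle]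
  · simp [toggle, hi]

lemma hammingDist_toggle_self (b : Fin n) (x : Fin n → Bool) :
    hammingDist x (toggle b x) = 1 := by
  rw [← card_diffSet, diffSet_toggle, card_singleton]

lemma diffSet_eq_singleton_iff {x y : Fin n → Bool} {b : Fin n} :
    diffSet x y = {b} ↔ y = toggle b x := by
  refine ⟨fun h => ?_, fun h => h ▸ diffSet_toggle b x⟩
  rw [← diffSet_eq_empty, ← symmDiff_diffSet _ x, diffSet_comm, diffSet_toggle, h,
    symmDiff_self, bot_eq_empty]

lemma diffSet_toggle_right (x r : Fin n → Bool) (b : Fin n) :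
    diffSet x (toggle b r) = diffSet x r ∆ {b} := by
  rw [← diffSet_toggle b r, symmDiff_diffSet]

lemma hypercube_adj_iff {x y : Fin n → Bool} :
    (hypercube n).Adj x y ↔ ∃ b, diffSet x y = {b} := by
  simp only [hypercube, piBox, completeGraph_eq_top, top_adj, eq_singleton_iff_unique_mem,
    diffSet, mem_filter, mem_univ, true_and]
  refine exists_congr fun b => and_congr_right fun _ => forall_congr' fun j => ?_
  rw [not_imp_comm]

lemma hypercube_adj_iff_hammingDist {x y : Fin n → Bool} :
    (hypercube n).Adj x y ↔ hammingDist x y = 1 := by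
  rw [hypercube_adj_iff, ← card_diffSet, card_eq_one]

lemma hypercube_adj_iff_toggle {x y : Fin n → Bool} :
    (hypercube n).Adj x y ↔ ∃ b, y = toggle b x := by
  simp only [hypercube_adj_iff, diffSet_eq_singleton_iff]

lemma hammingDist_mod_two_of_adj {x x' y y' : Fin n → Bool} (hx : (hypercube n).Adj x x')
    (hy : (hypercube n).Adj y y') : hammingDist x' y' % 2 = hammingDist x y % 2 := by
  rw [hypercube_adj_iff_hammingDist] at hx hy
  have := hammingDist_mod_two x' x y'
  have := hammingDist_mod_two x y y'
  rw [hammingDist_comm x' x] at *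
  omega

lemma adj_toggle (b : Fin n) (x : Fin n → Bool) : (hypercube n).Adj x (toggle b x) :=
  hypercube_adj_iff_toggle.2 ⟨b, rfl⟩

lemma toggle_toggle (b : Fin n) (x : Fin n → Bool) : toggle b (toggle b x) = x := by
  rw [eq_comm, ← diffSet_eq_singleton_iff, diffSet_comm, diffSet_toggle]

lemma hammingDist_toggle_mod_two (v x : Fin n → Bool) (b : Fin n) :
    (hammingDist v (toggle b x) + 1) % 2 = hammingDist v x % 2 := by
  have := hammingDist_mod_two v x (toggle b x)
  rw [hammingDist_toggle_self] at this
  omega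

lemma card_filter_hammingDist_toggle_le {x r : Fin n → Bool} (hxr : x ≠ r) :
    #{b | hammingDist x (toggle b r) ≤ 1} ≤ 2 - hammingDist x r % 2 := by
  have hpos : 0 < hammingDist x r := hammingDist_pos.2 hxr
  have key : ∀ b, hammingDist x (toggle b r) ≤ 1 → b ∈ diffSet x r ∧ hammingDist x r ≤ 2 := by
    intro b hb
    rw [← card_diffSet, diffSet_toggle_right] at hb
    by_cases hbD : b ∈ diffSet x r
    · rw [symmDiff_singleton_of_mem hbD, card_erase_of_mem hbD, card_diffSet] at hb
      exact ⟨hbD, by omega⟩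
    · rw [symmDiff_singleton_of_notMem hbD, card_insert_of_notMem hbD, card_diffSet] at hb
      omega
  by_cases h2 : hammingDist x r ≤ 2
  · calc #{b | hammingDist x (toggle b r) ≤ 1}
        ≤ #(diffSet x r) := card_le_card fun b hb => (key b (mem_filter.1 hb).2).1
      _ ≤ 2 - hammingDist x r % 2 := by rw [card_diffSet]; omega
  · rw [card_eq_zero.2 (filter_eq_empty_iff.2 fun b _ hb => h2 (key b hb).2)]
    exact Nat.zero_le _

/-- With its next move, a cop at odd distance can block two of the robber's `n` escape
coordinates, a cop at even distance only one. -/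
def RobberSafe (c : Fin k → Fin n → Bool) (r : Fin n → Bool) : Prop :=
  (∀ i, 2 ≤ hammingDist (c i) r) ∧ ∑ i, (hammingDist (c i) r % 2 + 1) < n

lemma exists_robberSafe_step {c c' : Fin k → Fin n → Bool} {r : Fin n → Bool}
    (hs : RobberSafe c r) (hc : ∀ i, (hypercube n).Adj (c i) (c' i)) :
    ∃ r', (hypercube n).Adj r r' ∧ RobberSafe c' r' := by
  have hbad : ∀ i, #{b | hammingDist (c' i) (toggle b r) ≤ 1} ≤ hammingDist (c i) r % 2 + 1 := by
    intro i
    have hci := hypercube_adj_iff_hammingDist.1 (hc i)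
    have hpar := hammingDist_mod_two (c i) (c' i) r
    have hne : c' i ≠ r := by
      rintro h
      have := hs.1 i
      rw [h] at hci
      omega
    have := card_filter_hammingDist_toggle_le hne
    omega
  obtain ⟨b, -, hb⟩ := exists_mem_forall_notMem_of_sum_card_lt (S := univ) (s := univ)
    (B := fun i => {b | hammingDist (c' i) (toggle b r) ≤ 1})
    ((sum_le_sum fun i _ => hbad i).trans_lt (by simpa using hs.2))
  refine ⟨toggle b r, adj_toggle b r, fun i => ?_, ?_⟩
  · by_contra h
    exact hb i (mem_univ i) (mem_filter.2 ⟨mem_univ b, by omega⟩)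
  · calc ∑ i, (hammingDist (c' i) (toggle b r) % 2 + 1)
        = ∑ i, (hammingDist (c i) r % 2 + 1) := by
          refine sum_congr rfl fun i _ => ?_
          rw [hammingDist_mod_two_of_adj (hc i) (adj_toggle b r)]
      _ < n := hs.2

def parityClass (v : Fin n → Bool) (e : ℕ) : Finset (Fin n → Bool) :=
  {r | hammingDist v r % 2 = e % 2}

lemma two_mul_card_parityClass (hn : 0 < n) (v : Fin n → Bool) (e : ℕ) :
    2 * #(parityClass v e) = 2 ^ n := by
  have hswap : #(parityClass v e) = #{r | ¬ hammingDist v r % 2 = e % 2} := by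
    refine card_nbij' (toggle ⟨0, hn⟩) (toggle ⟨0, hn⟩) ?_ ?_ (fun x _ => toggle_toggle _ x)
      (fun x _ => toggle_toggle _ x) <;>
    · intro x hx
      have := hammingDist_toggle_mod_two v x ⟨0, hn⟩
      simp only [parityClass, mem_coe, mem_filter, mem_univ, true_and] at hx ⊢
      omega
  have := card_filter_add_card_filter_not (s := univ) (fun r : Fin n → Bool =>
    hammingDist v r % 2 = e % 2)
  rw [card_univ, Fintype.card_fun, Fintype.card_bool, Fintype.card_fin] at this
  rw [parityClass] at hswap ⊢
  omega

lemma card_filter_parityClass_hammingDist_le (v x : Fin n → Bool) (e : ℕ) :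
    #{r ∈ parityClass v e | hammingDist x r ≤ 1} ≤
      if (hammingDist x v + e) % 2 = 1 then n else 1 := by
  have hpar : ∀ r ∈ parityClass v e, hammingDist x r % 2 = (hammingDist x v + e) % 2 := by
    intro r hr
    rw [parityClass, mem_filter] at hr
    have := hammingDist_mod_two x v r
    omega
  split_ifs with h
  · calc #{r ∈ parityClass v e | hammingDist x r ≤ 1}
        ≤ #(univ.image fun b => toggle b x) := by
          refine card_le_card fun r hr => ?_
          rw [mem_filter] at hr
          have hd : hammingDist x r = 1 := by have := hpar r hr.1; omega
          obtain ⟨b, rfl⟩ := hypercube_adj_iff_toggle.1 (hypercube_adj_iff_hammingDist.2 hd)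
          exact mem_image_of_mem _ (mem_univ b)
      _ ≤ n := card_image_le.trans (card_univ.trans (Fintype.card_fin n)).le
  · refine card_le_one.2 fun r hr r' hr' => ?_
    rw [mem_filter] at hr hr'
    have hd := hpar r hr.1
    have hd' := hpar r' hr'.1
    have h0 : hammingDist x r = 0 := by omega
    have h0' : hammingDist x r' = 0 := by omega
    rw [hammingDist_eq_zero] at h0 h0'
    rw [← h0, ← h0']

lemma exists_robberSafe_start (hk : 3 * k < 2 * n) (c : Fin k → Fin n → Bool) :
    ∃ r, RobberSafe c r := by
  let v : Fin n → Bool := fun _ => false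
  obtain ⟨e, he⟩ : ∃ e, ∑ i, ((hammingDist (c i) v + e) % 2 + 1) < n := by
    have : ∑ i, ((hammingDist (c i) v + 0) % 2 + 1) +
        ∑ i, ((hammingDist (c i) v + 1) % 2 + 1) = 3 * k := by
      rw [← sum_add_distrib, sum_congr rfl (g := fun _ => 3) fun i _ => by omega]
      simp [mul_comm]
    by_contra! h
    have := h 0
    have := h 1
    omega
  rcases k.eq_zero_or_pos with rfl | hk0
  · exact ⟨v, fun i => i.elim0, by simp; omega⟩
  have hbad : ∀ i, 2 * #{r ∈ parityClass v e | hammingDist (c i) r ≤ 1} ≤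
      n * ((hammingDist (c i) v + e) % 2 + 1) := by
    intro i
    have := card_filter_parityClass_hammingDist_le v (c i) e
    rcases Nat.mod_two_eq_zero_or_one (hammingDist (c i) v + e) with h | h <;>
      norm_num [h] at this ⊢ <;> omega
  have hsum : ∑ i, #{r ∈ parityClass v e | hammingDist (c i) r ≤ 1} < #(parityClass v e) := by
    have := two_mul_card_parityClass (by omega) v e
    have := Nat.mul_pred_lt_two_pow n
    have : n * ∑ i, ((hammingDist (c i) v + e) % 2 + 1) ≤ n * (n - 1) :=
      Nat.mul_le_mul_left n (by omega)
    have : 2 * ∑ i, #{r ∈ parityClass v e | hammingDist (c i) r ≤ 1} ≤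
        n * ∑ i, ((hammingDist (c i) v + e) % 2 + 1) := by
      rw [mul_sum, mul_sum]
      exact sum_le_sum fun i _ => hbad i
    omega
  obtain ⟨r, hr, hfar⟩ := exists_mem_forall_notMem_of_sum_card_lt hsum
  refine ⟨r, fun i => ?_, ?_⟩
  · by_contra h
    exact hfar i (mem_univ i) (mem_filter.2 ⟨hr, by omega⟩)
  · rw [parityClass, mem_filter] at hr
    convert he using 2 with i
    have := hammingDist_mod_two (c i) v r
    omega

theorem _root_.not_activeCopsWin_hypercube (hk : 3 * k < 2 * n) : ¬ ActiveCopsWin (hypercube n) k :=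
  not_activeCopsWin_of_safe RobberSafe (fun v => ⟨_, adj_toggle ⟨0, by omega⟩ v⟩)
    (exists_robberSafe_start hk) (fun _ _ _ => exists_robberSafe_step)
    fun c r hs i => by
      have := hs.1 i
      exact ⟨fun h => by rw [h, hammingDist_self] at this; omega,
        fun h => by rw [hypercube_adj_iff_hammingDist] at h; omega⟩

/-- Coordinate `b < k` is owned by cop `b`, and coordinate `k + j` by cop `2 j + σ`; so only cops
whose index has parity `σ` can own two coordinates. -/
def owner (k σ b : ℕ) : ℕ := if b < k then b else 2 * (b - k) + σ

def territory (k σ i : ℕ) : Finset (Fin n) := {b | owner k σ b = i}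

lemma mem_territory {b : Fin n} {i : ℕ} : b ∈ territory k σ i ↔ owner k σ b = i := by
  rw [territory, mem_filter, and_iff_right (mem_univ b)]

lemma owner_lt (hk : 2 * n ≤ 3 * k) (hσ : σ < 2) (b : Fin n) : owner k σ b < k := by
  have := b.isLt
  unfold owner
  split_ifs <;> omega

lemma card_territory_le_two (i : ℕ) : #(territory (n := n) k σ i) ≤ 2 := by
  calc #(territory (n := n) k σ i) ≤ #(univ : Finset Bool) := by
        refine card_le_card_of_injOn (fun b => decide (b.val < k))
          (fun _ _ => mem_coe.2 (mem_univ _)) fun b hb b' hb' h => ?_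
        rw [mem_coe, mem_territory] at hb hb'
        simp only [decide_eq_decide] at h
        unfold owner at hb hb'
        ext
        split_ifs at hb hb' <;> omega
    _ = 2 := rfl

lemma card_territory_le_one (hσ : σ < 2) {i : ℕ} (hi : i % 2 ≠ σ) :
    #(territory (n := n) k σ i) ≤ 1 := by
  refine card_le_one.2 fun b hb b' hb' => ?_
  rw [mem_territory] at hb hb'
  unfold owner at hb hb'
  ext
  split_ifs at hb hb' <;> omega

lemma sdiff_territory_nonempty (hσ : σ < 2) {i : ℕ} {D : Finset (Fin n)} (hD : 2 ≤ #D)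
    (hpar : i % 2 = σ → #D % 2 = 1) : (D \ territory k σ i).Nonempty := by
  rw [sdiff_nonempty]
  intro hsub
  have := card_le_card hsub
  by_cases hi : i % 2 = σ
  · have := card_territory_le_two (n := n) (k := k) (σ := σ) i
    have := hpar hi
    omega
  · have := card_territory_le_one (n := n) (k := k) hσ hi
    omega

lemma sum_ite_mem_territory (hk : 2 * n ≤ 3 * k) (hσ : σ < 2) (b : Fin n) :
    ∑ i : Fin k, (if b ∈ territory k σ i then 1 else 2) + 1 = 2 * k := by
  let o : Fin k := ⟨owner k σ b, owner_lt hk hσ b⟩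
  have hmem : ∀ i : Fin k, b ∈ territory k σ i ↔ i = o := by
    intro i
    rw [mem_territory, Fin.ext_iff, eq_comm]
  simp only [hmem]
  rw [← add_sum_erase univ _ (mem_univ o), if_pos rfl,
    sum_congr rfl fun i hi => if_neg (ne_of_mem_erase hi), sum_const,
    card_erase_of_mem (mem_univ o), card_univ, Fintype.card_fin, smul_eq_mul]
  have := o.isLt
  omega

/-- `D` is the set of coordinates in which a cop differs from the robber and `Θ` is the cop's
territory: differences outside the territory weigh 2, agreements inside it weigh 1. -/
def potential {α : Type*} [DecidableEq α] (Θ D : Finset α) : ℕ := 2 * #(D \ Θ) + #(Θ \ D)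

lemma potential_symmDiff_singleton_le {α : Type*} [DecidableEq α] (Θ D : Finset α) (b : α) :
    potential Θ ((D ∆ {b})) ≤ potential Θ D + if b ∈ Θ then 1 else 2 := by
  have h₁ : (D ∆ {b}) \ Θ ⊆ insert b (D \ Θ) := by
    intro j; simp only [mem_sdiff, mem_symmDiff, mem_insert, mem_singleton]; tauto
  have h₂ : Θ \ (D ∆ {b}) ⊆ insert b (Θ \ D) := by
    intro j; simp only [mem_sdiff, mem_symmDiff, mem_insert, mem_singleton]; tauto
  have := (card_le_card h₁).trans (card_insert_le _ _)
  have := (card_le_card h₂).trans (card_insert_le _ _)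
  unfold potential
  split_ifs with hb
  · have h₃ : (D ∆ {b}) \ Θ ⊆ D \ Θ := by
      intro j; simp only [mem_sdiff, mem_symmDiff, mem_singleton]; grind
    have := card_le_card h₃
    omega
  · have h₃ : Θ \ (D ∆ {b}) ⊆ Θ \ D := by
      intro j; simp only [mem_sdiff, mem_symmDiff, mem_singleton]; grind
    have := card_le_card h₃
    omega

lemma potential_symmDiff_singleton_add_two {α : Type*} [DecidableEq α] {Θ D : Finset α} {a : α}
    (ha : a ∈ D \ Θ) : potential Θ ((D ∆ {a})) + 2 = potential Θ D := by
  rw [mem_sdiff] at ha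
  have h₁ : Θ \ (D ∆ {a}) = Θ \ D := by
    ext j; simp only [mem_sdiff, mem_symmDiff, mem_singleton]; grind
  unfold potential
  rw [symmDiff_singleton_of_mem ha.1, erase_sdiff_comm, ← symmDiff_singleton_of_mem ha.1, h₁,
    card_erase_of_mem (mem_sdiff.2 ha)]
  have := card_pos.2 ⟨a, mem_sdiff.2 ha⟩
  omega

noncomputable def copMove (hn : 0 < n) (Θ : Finset (Fin n)) (x r : Fin n → Bool) : Fin n → Bool :=
  if hammingDist x r = 1 then r
  else toggle (if h : (diffSet x r \ Θ).Nonempty then h.choose else ⟨0, hn⟩) x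

lemma adj_copMove (hn : 0 < n) (Θ : Finset (Fin n)) (x r : Fin n → Bool) :
    (hypercube n).Adj x (copMove hn Θ x r) := by
  unfold copMove
  split_ifs with h
  · exact hypercube_adj_iff_hammingDist.2 h
  all_goals exact adj_toggle _ x

lemma copMove_of_hammingDist_eq_one (hn : 0 < n) (Θ : Finset (Fin n)) {x r : Fin n → Bool}
    (h : hammingDist x r = 1) : copMove hn Θ x r = r := if_pos h

lemma potential_copMove_add_two_le (hn : 0 < n) {Θ : Finset (Fin n)} {x r : Fin n → Bool}
    (h₁ : hammingDist x r ≠ 1) (hΘ : (diffSet x r \ Θ).Nonempty) (b : Fin n) :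
    potential Θ (diffSet (copMove hn Θ x r) (toggle b r)) + 2 ≤
      potential Θ (diffSet x r) + if b ∈ Θ then 1 else 2 := by
  obtain ⟨a, ha, hmove⟩ : ∃ a ∈ diffSet x r \ Θ, copMove hn Θ x r = toggle a x :=
    ⟨_, hΘ.choose_spec, by rw [copMove, if_neg h₁, dif_pos hΘ]⟩
  have hdiff : diffSet (toggle a x) r = diffSet x r ∆ {a} := by
    rw [diffSet_comm, diffSet_toggle_right, diffSet_comm]
  rw [hmove, diffSet_toggle_right, hdiff, ← potential_symmDiff_singleton_add_two ha]
  have := potential_symmDiff_singleton_le Θ (diffSet x r ∆ {a}) b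
  omega

lemma sum_potential_copMove_lt (hn : 0 < n) (hk : 2 * n ≤ 3 * k) (hσ : σ < 2)
    {c : Fin k → Fin n → Bool} {r : Fin n → Bool} (hne : ∀ i, c i ≠ r)
    (hcap : ∀ i : Fin k, copMove hn (territory k σ i) (c i) r ≠ r)
    (hpar : ∀ i : Fin k, i.val % 2 = σ → hammingDist (c i) r % 2 = 1) (b : Fin n) :
    ∑ i : Fin k, potential (territory k σ i) (diffSet (copMove hn (territory k σ i) (c i) r)
      (toggle b r)) < ∑ i : Fin k, potential (territory k σ i) (diffSet (c i) r) := by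
  have hd₁ : ∀ i, hammingDist (c i) r ≠ 1 := fun i h =>
    hcap i (copMove_of_hammingDist_eq_one hn _ h)
  have hΘ : ∀ i : Fin k, (diffSet (c i) r \ territory k σ i).Nonempty := by
    intro i
    refine sdiff_territory_nonempty hσ ?_ fun h => ?_ <;> rw [card_diffSet]
    · have := hammingDist_pos.2 (hne i)
      have := hd₁ i
      omega
    · exact hpar i h
  have hsum := sum_le_sum fun i (_ : i ∈ univ) =>
    potential_copMove_add_two_le hn (hd₁ i) (hΘ i) b
  rw [sum_add_distrib, sum_add_distrib] at hsum
  have := sum_ite_mem_territory hk hσ b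
  simp only [sum_const, card_univ, Fintype.card_fin, smul_eq_mul] at hsum
  omega

theorem _root_.activeCopsWin_hypercube (hn : 0 < n) (hk : 2 * n ≤ 3 * k) :
    ActiveCopsWin (hypercube n) k := by
  let v : Fin n → Bool := fun _ => false
  -- cops of index parity `σ r₀` are at odd distance from the robber at each of their turns
  let σ : (Fin n → Bool) → ℕ := fun r₀ => (hammingDist v r₀ + 1) % 2
  refine activeCopsWin_of_potential (fun i : Fin k => if i.val % 2 = 0 then v else toggle ⟨0, hn⟩ v)
    (fun r₀ c r i => copMove hn (territory k (σ r₀) i) (c i) r) (fun _ _ _ _ => adj_copMove _ _ _ _)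
    (fun r₀ c r => ∀ i : Fin k, hammingDist (c i) r % 2 = (hammingDist v r₀ + i) % 2)
    (fun r₀ c r => ∑ i : Fin k, potential (territory k (σ r₀) i) (diffSet (c i) r)) ?_ ?_
  · intro r₀ i
    have := hammingDist_toggle_mod_two r₀ v ⟨0, hn⟩
    rw [hammingDist_comm r₀, hammingDist_comm r₀] at this
    dsimp only
    split_ifs <;> omega
  · intro r₀ c r r' hinv hne hcap hadj
    obtain ⟨b, rfl⟩ := hypercube_adj_iff_toggle.1 hadj
    refine ⟨fun i => ?_, sum_potential_copMove_lt hn hk (Nat.mod_lt _ two_pos) hne hcap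
      (fun i hi => ?_) b⟩
    · rw [hammingDist_mod_two_of_adj (adj_copMove _ _ _ _) (adj_toggle b r)]
      exact hinv i
    · have := hinv i
      omega

end Hypercube


/-- For every positive integer `n`, the fully active cop number of the
hypercube `Q_n` equals `⌈2n/3⌉`. -/
theorem acop_hypercube (n : ℕ) (hn : 0 < n) :
    acop (hypercube n) = (2 * n + 2) / 3 := by
  have hwin := activeCopsWin_hypercube (k := (2 * n + 2) / 3) hn (by omega)
  refine le_antisymm (Nat.sInf_le hwin) (le_csInf ⟨_, hwin⟩ fun m hm => ?_)
  by_contra h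
  exact not_activeCopsWin_hypercube (by omega) hm
end

section
/- Let φ : H → G be a covering map of graphs, let C be a multiset of cop starting positions in H and R a robber starting position in H. If cops starting at C can capture a robber starting at R in the fully active game on H, then cops starting at φ(C) can capture a robber starting at φ(R) in the fully active game on G. -/
open SimpleGraph

universe u v

variable {V : Type u}

/-- `φ` is a covering map from `H` onto `G`: it is surjective and, for every
vertex `v` of `H`, it restricts to a bijection from the neighborhood of `v`
onto the neighborhood of `φ v`. -/
def IsCoveringMap' {VH : Type u} {VG : Type v} (H : SimpleGraph VH)
    (G : SimpleGraph VG) (φ : VH → VG) : Prop :=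
  Function.Surjective φ ∧
    ∀ v : VH, Set.BijOn φ (H.neighborSet v) (G.neighborSet (φ v))

section CoverAux

variable {VH : Type u} {VG : Type v} {H : SimpleGraph VH} {G : SimpleGraph VG} {φ : VH → VG}

lemma cover_adj (hφ : IsCoveringMap' H G φ) {v u : VH} (h : H.Adj v u) :
    G.Adj (φ v) (φ u) := (hφ.2 v).mapsTo h

/-- Projection of a configuration along `φ`. -/
def projCfg (φ : VH → VG) (n : ℕ) (p : CRConfig VH n) : CRConfig VG n :=
  (φ ∘ p.1, φ p.2)

open Classical in
/-- Lift of a robber step: given a robber at `v` in `H` and a target `w` in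
`G`, pick a neighbor of `v` mapping to `w` if one exists, else any neighbor. -/
noncomputable def liftStep (φ : VH → VG) (hNH : ∀ v : VH, ∃ u, H.Adj v u)
    (v : VH) (w : VG) : VH :=
  if h : ∃ u, H.Adj v u ∧ φ u = w then h.choose else (hNH v).choose

lemma liftStep_adj (hNH : ∀ v : VH, ∃ u, H.Adj v u) (v : VH) (w : VG) :
    H.Adj v (liftStep φ hNH v w) := by
  unfold liftStep
  split
  · next h => exact h.choose_spec.1
  · exact (hNH v).choose_spec

lemma liftStep_push (hφ : IsCoveringMap' H G φ) (hNH : ∀ v : VH, ∃ u, H.Adj v u)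
    {v : VH} {w : VG} (hadj : G.Adj (φ v) w) :
    φ (liftStep φ hNH v w) = w := by
  have hex : ∃ u, H.Adj v u ∧ φ u = w := by
    obtain ⟨u, hu, he⟩ := (hφ.2 v).surjOn hadj
    exact ⟨u, hu, he⟩
  unfold liftStep
  rw [dif_pos hex]
  exact hex.choose_spec.2

variable (φ) in
/-- Simulation on the reversed history: reconstructs the lifted play in `H`
from a (reversed) history of configurations in `G` together with the current
configuration. -/
noncomputable def simRev (n : ℕ) (C : Fin n → VH) (R : VH)
    (cs : ActiveCopStrategy H n) (hNH : ∀ v : VH, ∃ u, H.Adj v u) :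
    List (CRConfig VG n) → CRConfig VG n → List (CRConfig VH n) × CRConfig VH n
  | [], _ => ([], (C, R))
  | a :: t, c =>
      let prev := simRev n C R cs hNH t a
      (prev.1 ++ [prev.2],
        (cs.move prev.1 prev.2, liftStep φ hNH prev.2.2 c.2))

variable (φ) in
/-- Simulation of the lifted play in `H` from a history and configuration in `G`. -/
noncomputable def simPlay (n : ℕ) (C : Fin n → VH) (R : VH)
    (cs : ActiveCopStrategy H n) (hNH : ∀ v : VH, ∃ u, H.Adj v u)
    (h : List (CRConfig VG n)) (c : CRConfig VG n) :
    List (CRConfig VH n) × CRConfig VH n :=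
  simRev φ n C R cs hNH h.reverse c

lemma simPlay_nil (n : ℕ) (C : Fin n → VH) (R : VH)
    (cs : ActiveCopStrategy H n) (hNH : ∀ v : VH, ∃ u, H.Adj v u)
    (c : CRConfig VG n) :
    simPlay φ n C R cs hNH [] c = ([], (C, R)) := rfl

lemma simPlay_concat (n : ℕ) (C : Fin n → VH) (R : VH)
    (cs : ActiveCopStrategy H n) (hNH : ∀ v : VH, ∃ u, H.Adj v u)
    (l : List (CRConfig VG n)) (x c : CRConfig VG n) :
    simPlay φ n C R cs hNH (l ++ [x]) c =
      (let prev := simPlay φ n C R cs hNH l x;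
        (prev.1 ++ [prev.2],
          (cs.move prev.1 prev.2, liftStep φ hNH prev.2.2 c.2))) := by
  simp [simPlay, simRev]

open Classical in
/-- The projected cop strategy's move function. -/
noncomputable def gmove (φ : VH → VG) (n : ℕ) (C : Fin n → VH) (R : VH)
    (cs : ActiveCopStrategy H n) (hNH : ∀ v : VH, ∃ u, H.Adj v u)
    (hNG : ∀ w : VG, ∃ w', G.Adj w w')
    (h : List (CRConfig VG n)) (c : CRConfig VG n) (i : Fin n) : VG :=
  if c.1 i = φ ((simPlay φ n C R cs hNH h c).2.1 i) then
    φ (cs.move (simPlay φ n C R cs hNH h c).1 (simPlay φ n C R cs hNH h c).2 i)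
  else (hNG (c.1 i)).choose

lemma gmove_adj (hφ : IsCoveringMap' H G φ) (n : ℕ) (C : Fin n → VH) (R : VH)
    (cs : ActiveCopStrategy H n) (hNH : ∀ v : VH, ∃ u, H.Adj v u)
    (hNG : ∀ w : VG, ∃ w', G.Adj w w')
    (h : List (CRConfig VG n)) (c : CRConfig VG n) (i : Fin n) :
    G.Adj (c.1 i) (gmove φ n C R cs hNH hNG h c i) := by
  unfold gmove
  split
  · next he =>
      rw [he]
      exact cover_adj hφ (cs.move_adj _ _ i)
  · exact (hNG (c.1 i)).choose_spec

end CoverAux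

/-- Let `φ : H → G` be a covering map of graphs.  If cops starting at
positions `C` can capture a robber starting at `R` in the fully active game on
`H`, then cops starting at `φ(C)` can capture a robber starting at `φ(R)` in
the fully active game on `G`. -/
theorem active_cops_win_of_coveringMap {VH : Type u} {VG : Type v}
    (H : SimpleGraph VH) (G : SimpleGraph VG) (φ : VH → VG)
    (hφ : IsCoveringMap' H G φ) (n : ℕ) (C : Fin n → VH) (R : VH)
    (hH : ∃ cs : ActiveCopStrategy H n, cs.init = C ∧
      ∀ rs : ActiveRobberStrategy H n, rs.init C = R → ActiveCapture cs rs) :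
    ∃ cs : ActiveCopStrategy G n, cs.init = φ ∘ C ∧
      ∀ rs : ActiveRobberStrategy G n,
        rs.init (φ ∘ C) = φ R → ActiveCapture cs rs := by
  classical
  by_cases hiso : ∀ w : VG, ∃ w', G.Adj w w'
  · -- Main case: no isolated vertices in `G` (hence none in `H`).
    have hNH : ∀ v : VH, ∃ u, H.Adj v u := by
      intro v
      obtain ⟨w', hw'⟩ := hiso (φ v)
      obtain ⟨u, hu, -⟩ := (hφ.2 v).surjOn hw'
      exact ⟨u, hu⟩
    obtain ⟨cs, hcsinit, hcs⟩ := hH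
    subst hcsinit
    refine ⟨⟨φ ∘ cs.init, gmove φ n cs.init R cs hNH hiso,
      gmove_adj hφ n cs.init R cs hNH hiso⟩, rfl, ?_⟩
    intro rs hrsinit
    -- the lifted robber strategy on `H`
    set rt : ActiveRobberStrategy H n :=
      ⟨fun _ => R,
       fun hh cc => liftStep φ hNH cc.2
         (rs.move (hh.map (projCfg φ n)) (projCfg φ n cc)),
       fun hh cc => liftStep_adj hNH _ _⟩ with hrt
    have hcap := hcs rt rfl
    set Hp := crPlay n cs.init rt.init cs.move rt.move with hHp
    set Gp := crPlay n (φ ∘ cs.init) rs.init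
      (gmove φ n cs.init R cs hNH hiso) rs.move with hGp
    -- key invariant: the G-play is the projection of the H-play, and the
    -- simulation reconstructs the H-play.
    have key : ∀ t,
        (Gp t).1 = List.map (projCfg φ n) (Hp t).1 ∧
        (Gp t).2 = projCfg φ n (Hp t).2 ∧
        simPlay φ n cs.init R cs hNH (Gp t).1 (Gp t).2 = Hp t := by
      intro t
      induction t with
      | zero =>
          refine ⟨rfl, ?_, ?_⟩
          · show (φ ∘ cs.init, rs.init (φ ∘ cs.init)) = (φ ∘ cs.init, φ R)
            rw [hrsinit]
          · show simPlay φ n cs.init R cs hNH [] _ = ([], (cs.init, R))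
            exact simPlay_nil _ _ _ _ _ _
      | succ t ih =>
          obtain ⟨ih1, ih2, ih3⟩ := ih
          -- new cop positions agree
          have hcop : ∀ i, gmove φ n cs.init R cs hNH hiso (Gp t).1 (Gp t).2 i
              = φ (cs.move (Hp t).1 (Hp t).2 i) := by
            intro i
            unfold gmove
            rw [ih3]
            have hc1 : (Gp t).2.1 i = φ ((Hp t).2.1 i) := by
              rw [ih2]; rfl
            rw [if_pos hc1]
          have hcopf : gmove φ n cs.init R cs hNH hiso (Gp t).1 (Gp t).2
              = φ ∘ (cs.move (Hp t).1 (Hp t).2) := funext hcop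
          -- the robber's new G-position
          have hrob2 : (Gp t).2.2 = φ ((Hp t).2.2) := by rw [ih2]; rfl
          -- robber's new position in H is the lift of his new position in G
          have hrmove : rt.move (Hp t).1
                (cs.move (Hp t).1 (Hp t).2, (Hp t).2.2)
              = liftStep φ hNH (Hp t).2.2
                (rs.move (Gp t).1
                  (gmove φ n cs.init R cs hNH hiso (Gp t).1 (Gp t).2,
                    (Gp t).2.2)) := by
            show liftStep φ hNH (Hp t).2.2
                (rs.move (List.map (projCfg φ n) (Hp t).1)
                  (φ ∘ (cs.move (Hp t).1 (Hp t).2), φ (Hp t).2.2)) = _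
            rw [← ih1, ← hcopf, ← hrob2]
          have hGp1 : (Gp (t + 1)).1 = (Gp t).1 ++ [(Gp t).2] := rfl
          have hHp1 : (Hp (t + 1)).1 = (Hp t).1 ++ [(Hp t).2] := rfl
          have hGcop : (Gp (t + 1)).2.1
              = gmove φ n cs.init R cs hNH hiso (Gp t).1 (Gp t).2 := rfl
          have hGrob : (Gp (t + 1)).2.2
              = rs.move (Gp t).1
                  (gmove φ n cs.init R cs hNH hiso (Gp t).1 (Gp t).2,
                    (Gp t).2.2) := rfl
          have hHcop : (Hp (t + 1)).2.1 = cs.move (Hp t).1 (Hp t).2 := rfl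
          have hHrob : (Hp (t + 1)).2.2
              = rt.move (Hp t).1
                  (cs.move (Hp t).1 (Hp t).2, (Hp t).2.2) := rfl
          -- adjacency of the robber's G-move, to push the lift down
          have hadjG : G.Adj (φ ((Hp t).2.2)) ((Gp (t + 1)).2.2) := by
            rw [← hrob2, hGrob]
            exact rs.move_adj (Gp t).1
              (gmove φ n cs.init R cs hNH hiso (Gp t).1 (Gp t).2, (Gp t).2.2)
          have hpush : φ ((Hp (t + 1)).2.2) = (Gp (t + 1)).2.2 := by
            rw [hHrob, hrmove, ← hGrob]
            exact liftStep_push hφ hNH (by rw [hGrob] at hadjG ⊢; exact hadjG)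
          refine ⟨?_, ?_, ?_⟩
          · rw [hGp1, hHp1, List.map_append, ← ih1, List.map_singleton, ← ih2]
          · show ((Gp (t+1)).2.1, (Gp (t+1)).2.2)
              = (φ ∘ (Hp (t+1)).2.1, φ ((Hp (t+1)).2.2))
            rw [hpush, hGcop, hHcop, hcopf]
          · rw [hGp1, simPlay_concat]
            show (let prev := simPlay φ n cs.init R cs hNH (Gp t).1 (Gp t).2;
              (prev.1 ++ [prev.2],
                (cs.move prev.1 prev.2,
                  liftStep φ hNH prev.2.2 (Gp (t+1)).2.2))) = Hp (t + 1)
            rw [ih3]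
            show ((Hp t).1 ++ [(Hp t).2],
              (cs.move (Hp t).1 (Hp t).2,
                liftStep φ hNH (Hp t).2.2 (Gp (t+1)).2.2)) = Hp (t + 1)
            rw [hGrob, ← hrmove]
            rfl
    -- transfer the capture
    obtain ⟨t, hc⟩ := hcap
    obtain ⟨ih1, ih2, ih3⟩ := key t
    refine ⟨t, ?_⟩
    rcases hc with ⟨i, hi⟩ | ⟨i, hi⟩
    · left
      refine ⟨i, ?_⟩
      show (Gp t).2.1 i = (Gp t).2.2
      rw [ih2]
      show φ ((Hp t).2.1 i) = φ ((Hp t).2.2)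
      rw [hi]
    · right
      refine ⟨i, ?_⟩
      show gmove φ n cs.init R cs hNH hiso (Gp t).1 (Gp t).2 i = (Gp t).2.2
      unfold gmove
      rw [ih3]
      have hc1 : (Gp t).2.1 i = φ ((Hp t).2.1 i) := by rw [ih2]; rfl
      rw [if_pos hc1, hi, ih2]
      rfl
  · -- Degenerate case: `G` has an isolated vertex.
    push_neg at hiso
    obtain ⟨w0, hw0⟩ := hiso
    -- no robber strategy on `G` can exist
    have hnors : ∀ rs : ActiveRobberStrategy G n, False := by
      intro rs
      exact hw0 _ (rs.move_adj [] (fun _ => w0, w0))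
    rcases n with _ | m
    · exact ⟨⟨φ ∘ C, fun _ _ => Fin.elim0, fun _ _ i => i.elim0⟩, rfl,
        fun rs _ => (hnors rs).elim⟩
    · -- `H` has an isolated vertex, contradicting the cop strategy on `H`
      obtain ⟨v0, hv0⟩ := hφ.1 w0
      obtain ⟨cs, -, -⟩ := hH
      have := cs.move_adj [] (fun _ => v0, v0) ⟨0, Nat.succ_pos m⟩
      have hGadj : G.Adj (φ v0) (φ _) := cover_adj hφ this
      rw [hv0] at hGadj
      exact (hw0 _ hGadj).elim
end
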